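/- Let V be a finite-dimensional vector space with a filtration by subspaces stable under an invertible operator Φ and a nilpotent operator N satisfying ΦNΦ⁻¹ = q⁻¹N. Suppose the associated graded module Gr(V), with its induced Φ and N, is q-pure of weight j (modeled as: dim ker(N^{i+1}) - dim ker(N^i) on Gr(V) matches the multiplicity pattern forced by purity, equivalently b(Gr(V)) = b(W,m) for the common eigenvalue-multiplicity data (W,m)). Then V is q-pure of weight j. In the key quantitative step: dim ker(N on Gr(V)) ≥ dim ker(N on V) ≥ b(W,m), and equality dim ker(N on V) = b(W,m) holds, where b(W,m) = Σ_{|α|≥q^{j/2}} (m(α) − m(qα)). -/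

import Mathlib

/-!
Two inequalities squeeze `dim ker N`. From above, an element of `ker N ∩ F i` either lies in
`F (i + 1)` or gives a nonzero element of the kernel of `N` on `F i / F (i + 1)`, so
`dim ker N ≤ dim ker (N on Gr V) = b(W, m)`. From below, `ΦNΦ⁻¹ = q⁻¹N` makes `N` map the
generalized `α`-eigenspace of `Φ` into the `q⁻¹α` one, hence `dim ker N ≥ Σ_α (m(α) − m(q⁻¹α))`
over any set of `α`. Over `|α| < q^{1+j/2}` this sum is at least the sum of `m` over the annulus
`q^{j/2} ≤ |α| < q^{1+j/2}`, and telescoping along `α, qα, q²α, …` shows that this annulus sum is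
`b(W, m)`, the terms `m(α) − m(qα)` being nonnegative by the wm-purity inequality.
-/

open Module

/-- The multiplicity `m(α)` of the eigenvalue data `(W, m)`. -/
noncomputable def specMult {V : Type*} [AddCommGroup V] [Module ℂ V]
    (Φ : V →ₗ[ℂ] V) (α : ℂ) : ℕ :=
  Module.finrank ℂ (Module.End.maxGenEigenspace Φ α)

noncomputable def bWM {V : Type*} [AddCommGroup V] [Module ℂ V]
    (q : ℝ) (j : ℤ) (Φ : V →ₗ[ℂ] V) (W : Finset ℂ) : ℕ :=
  ∑ α ∈ W.filter (fun α => q ^ ((j : ℝ) / 2) ≤ ‖α‖),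
    (specMult Φ α - specMult Φ ((q : ℂ) * α))

namespace Submodule

variable {K V : Type*} [DivisionRing K] [AddCommGroup V] [Module K V]

lemma finrank_comap_subtype (p p' : Submodule K V) :
    finrank K (p'.comap p.subtype) = finrank K ↥(p ⊓ p') := by
  rw [← finrank_map_subtype_eq, map_comap_subtype]

lemma finrank_le_finrank_inf_ker_add {V₂ : Type*} [AddCommGroup V₂] [Module K V₂]
    [FiniteDimensional K V] [FiniteDimensional K V₂] (f : V →ₗ[K] V₂) {p : Submodule K V}
    {p₂ : Submodule K V₂} (h : p.map f ≤ p₂) :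
    finrank K p ≤ finrank K ↥(p ⊓ LinearMap.ker f) + finrank K p₂ := by
  have := LinearMap.finrank_range_add_finrank_ker (f.domRestrict p)
  rw [LinearMap.range_domRestrict, LinearMap.ker_domRestrict, finrank_comap_subtype] at this
  have := finrank_mono h
  omega

end Submodule

lemma iSupIndep.sum_finrank_eq_finrank_sup {K V ι : Type*} [DivisionRing K] [AddCommGroup V]
    [Module K V] [FiniteDimensional K V] {p : ι → Submodule K V} (hp : iSupIndep p)
    (s : Finset ι) : ∑ i ∈ s, finrank K (p i) = finrank K ↥(s.sup p) := by
  classical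
  induction s using Finset.induction_on with
  | empty => rw [Finset.sum_empty, Finset.sup_empty, finrank_bot]
  | @insert a s ha ih =>
    have hdisj : Disjoint (p a) (s.sup p) :=
      (hp.disjoint_biSup ha).mono_right (Finset.sup_eq_iSup s p).le
    have := Submodule.finrank_sup_add_finrank_inf_eq (p a) (s.sup p)
    rw [hdisj.eq_bot, finrank_bot, add_zero] at this
    rw [Finset.sum_insert ha, Finset.sup_insert, ih, this]

namespace Module.End

lemma mapsTo_maxGenEigenspace_of_mul_eq {R M : Type*} [CommRing R] [AddCommGroup M] [Module R M]
    {f g N : End R M} (h : N * f = g * N) (μ : R) :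
    Set.MapsTo N (f.maxGenEigenspace μ) (g.maxGenEigenspace μ) := by
  intro x hx
  rw [SetLike.mem_coe, mem_maxGenEigenspace] at hx ⊢
  obtain ⟨k, hk⟩ := hx
  have hsemi : SemiconjBy N (f - μ • 1) (g - μ • 1) :=
    SemiconjBy.sub_right h (by simp [SemiconjBy])
  refine ⟨k, ?_⟩
  rw [← mul_apply, ← (hsemi.pow_right k).eq, mul_apply, hk, map_zero]

lemma mapsTo_maxGenEigenspace_inv_mul {K V : Type*} [Field K] [AddCommGroup V] [Module K V]
    {Φ N : End K V} {c : K} (hc : c ≠ 0) (hrel : N ∘ₗ Φ = c • (Φ ∘ₗ N)) (α : K) :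
    Set.MapsTo N (maxGenEigenspace Φ α) (maxGenEigenspace Φ (c⁻¹ * α)) := by
  have hsmul : maxGenEigenspace (c⁻¹ • c • Φ) (c⁻¹ * α) = maxGenEigenspace Φ (c⁻¹ * α) := by
    rw [smul_smul, inv_mul_cancel₀ hc, one_smul]
  refine (mapsTo_maxGenEigenspace_of_mul_eq (g := c • Φ) ?_ α).mono_right ?_
  · exact hrel.trans (smul_mul_assoc c Φ N).symm
  · exact hsmul ▸ genEigenspace_le_smul _ _ _ _

end Module.End

lemma hasEigenvalue_of_specMult_ne_zero {V : Type*} [AddCommGroup V] [Module ℂ V]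
    {Φ : V →ₗ[ℂ] V} {α : ℂ} (h : specMult Φ α ≠ 0) : Module.End.HasEigenvalue Φ α :=
  Module.End.HasUnifEigenvalue.lt (k := ⊤) zero_lt_one fun hbot =>
    h (by rw [specMult, Module.End.maxGenEigenspace, hbot, finrank_bot])

lemma sum_specMult_tsub_le_finrank_ker {V : Type*} [AddCommGroup V] [Module ℂ V]
    [FiniteDimensional ℂ V] {Φ N : V →ₗ[ℂ] V} {c : ℂ} (hc : c ≠ 0)
    (hrel : N ∘ₗ Φ = c • (Φ ∘ₗ N)) (s : Finset ℂ) :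
    ∑ α ∈ s, (specMult Φ α - specMult Φ (c⁻¹ * α)) ≤ finrank ℂ (LinearMap.ker N) := by
  let E : ℂ → Submodule ℂ V := fun α => Module.End.maxGenEigenspace Φ α ⊓ LinearMap.ker N
  have hE : iSupIndep E :=
    (Module.End.independent_maxGenEigenspace Φ).mono fun _ => inf_le_left
  calc ∑ α ∈ s, (specMult Φ α - specMult Φ (c⁻¹ * α))
      ≤ ∑ α ∈ s, finrank ℂ (E α) := Finset.sum_le_sum fun α _ => tsub_le_iff_right.mpr <|
        Submodule.finrank_le_finrank_inf_ker_add N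
          (Submodule.map_le_iff_le_comap.mpr (Module.End.mapsTo_maxGenEigenspace_inv_mul hc hrel α))
    _ = finrank ℂ ↥(s.sup E) := hE.sum_finrank_eq_finrank_sup s
    _ ≤ finrank ℂ (LinearMap.ker N) :=
        Submodule.finrank_mono (Finset.sup_le fun _ _ => inf_le_right)

lemma Finset.sum_comp_le_sum_of_injective {ι κ M : Type*} [AddCommMonoid M] [PartialOrder M]
    [CanonicallyOrderedAdd M] {f : κ → M} {g : ι → κ} (hg : Function.Injective g)
    {s : Finset ι} {t : Finset κ} (h : ∀ i ∈ s, f (g i) ≠ 0 → g i ∈ t) :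
    ∑ i ∈ s, f (g i) ≤ ∑ k ∈ t, f k := by
  classical
  rw [← Finset.sum_image hg.injOn]
  exact Finset.sum_le_sum_of_ne_zero fun k hk hfk => by
    obtain ⟨i, hi, rfl⟩ := Finset.mem_image.mp hk
    exact h i hi hfk

lemma Complex.norm_ofReal_mul {r : ℝ} (hr : 0 ≤ r) (z : ℂ) : ‖(r : ℂ) * z‖ = r * ‖z‖ := by
  rw [norm_mul, Complex.norm_real, Real.norm_of_nonneg hr]

lemma Complex.norm_ofReal_inv_mul {r : ℝ} (hr : 0 ≤ r) (z : ℂ) :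
    ‖(r : ℂ)⁻¹ * z‖ = r⁻¹ * ‖z‖ := by
  rw [← Complex.ofReal_inv, Complex.norm_ofReal_mul (inv_nonneg.mpr hr)]

/- Reindexing by `α ↦ qα` turns the left side into `Σ_{c ≤ ‖α‖} m α - Σ_{qc ≤ ‖α‖} m α`;
`hm` is what makes each truncated difference `m α - m (qα)` a genuine one. -/
lemma sum_filter_tsub_mul_le_sum_annulus (m : ℂ → ℕ) (W : Finset ℂ) {q c : ℝ} (hq : 1 < q)
    (hc : 0 < c) (hW : ∀ α, m α ≠ 0 → α ∈ W)
    (hm : ∀ α ∈ W, c < ‖α‖ → m α ≤ m ((q : ℂ)⁻¹ * α)) :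
    ∑ α ∈ W.filter (fun α => c ≤ ‖α‖), (m α - m (q * α)) ≤
      ∑ α ∈ W.filter (fun α => c ≤ ‖α‖ ∧ ‖α‖ < q * c), m α := by
  have hq0 : (q : ℂ) ≠ 0 := Complex.ofReal_ne_zero.mpr (by positivity)
  have hcqc : c < q * c := by nlinarith
  set upper := W.filter (fun α => c ≤ ‖α‖)
  set outer := W.filter (fun α => q * c ≤ ‖α‖)
  have h_split : ∑ α ∈ upper, m α =
      ∑ α ∈ W.filter (fun α => c ≤ ‖α‖ ∧ ‖α‖ < q * c), m α + ∑ α ∈ outer, m α := by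
    rw [← Finset.sum_filter_add_sum_filter_not upper (fun α => ‖α‖ < q * c)]
    simp only [upper, outer, Finset.filter_filter, not_lt]
    congr 2
    exact Finset.filter_congr fun α _ => ⟨And.right, fun h => ⟨hcqc.le.trans h, h⟩⟩
  have h_shift : ∑ α ∈ outer, m α ≤ ∑ α ∈ upper, m (q * α) := by
    calc ∑ α ∈ outer, m α = ∑ α ∈ outer, m (q * ((q : ℂ)⁻¹ * α)) := by
          simp only [mul_inv_cancel_left₀ hq0]
      _ ≤ ∑ α ∈ upper, m (q * α) := by
          refine Finset.sum_comp_le_sum_of_injective (f := fun α => m (q * α))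
            (mul_right_injective₀ (inv_ne_zero hq0)) fun α hα hmα => ?_
          obtain ⟨hαW, hqcα⟩ := Finset.mem_filter.mp hα
          rw [mul_inv_cancel_left₀ hq0] at hmα
          have hle := hm α hαW (hcqc.trans_le hqcα)
          refine Finset.mem_filter.mpr ⟨hW _ (by omega), ?_⟩
          rwa [Complex.norm_ofReal_inv_mul (by positivity), le_inv_mul_iff₀ (by positivity)]
  have h_tsub : ∑ α ∈ upper, (m α - m (q * α)) + ∑ α ∈ upper, m (q * α) =
      ∑ α ∈ upper, m α := by
    rw [← Finset.sum_add_distrib]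
    refine Finset.sum_congr rfl fun α hα => tsub_add_cancel_of_le ?_
    by_cases hmα : m (q * α) = 0
    · exact hmα ▸ Nat.zero_le _
    have hqα : c < ‖(q : ℂ) * α‖ := by
      rw [Complex.norm_ofReal_mul (by positivity)]
      nlinarith [(Finset.mem_filter.mp hα).2]
    simpa only [inv_mul_cancel_left₀ hq0] using hm _ (hW _ hmα) hqα
  omega

lemma sum_annulus_le_sum_filter_tsub_inv_mul (m : ℂ → ℕ) (W : Finset ℂ) {q c : ℝ} (hq : 1 < q)
    (hc : 0 < c) (hW : ∀ α, m α ≠ 0 → α ∈ W) :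
    ∑ α ∈ W.filter (fun α => c ≤ ‖α‖ ∧ ‖α‖ < q * c), m α ≤
      ∑ α ∈ W.filter (fun α => ‖α‖ < q * c), (m α - m ((q : ℂ)⁻¹ * α)) := by
  have hq0 : (q : ℂ) ≠ 0 := Complex.ofReal_ne_zero.mpr (by positivity)
  have hcqc : c < q * c := by nlinarith
  set lower := W.filter (fun α => ‖α‖ < q * c)
  set inner := W.filter (fun α => ‖α‖ < c)
  have h_split : ∑ α ∈ lower, m α =
      ∑ α ∈ W.filter (fun α => c ≤ ‖α‖ ∧ ‖α‖ < q * c), m α + ∑ α ∈ inner, m α := by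
    rw [← Finset.sum_filter_add_sum_filter_not lower (fun α => c ≤ ‖α‖)]
    simp only [lower, inner, Finset.filter_filter, not_le]
    congr 2
    · exact Finset.filter_congr fun α _ => and_comm
    · exact Finset.filter_congr fun α _ => ⟨And.right, fun h => ⟨h.trans hcqc, h⟩⟩
  have h_shift : ∑ α ∈ lower, m ((q : ℂ)⁻¹ * α) ≤ ∑ α ∈ inner, m α := by
    refine Finset.sum_comp_le_sum_of_injective (mul_right_injective₀ (inv_ne_zero hq0))
      fun α hα hmα => Finset.mem_filter.mpr ⟨hW _ hmα, ?_⟩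
    rw [Complex.norm_ofReal_inv_mul (by positivity), inv_mul_lt_iff₀ (by positivity)]
    exact (Finset.mem_filter.mp hα).2
  have h_tsub : ∑ α ∈ lower, m α ≤
      ∑ α ∈ lower, (m α - m ((q : ℂ)⁻¹ * α)) + ∑ α ∈ lower, m ((q : ℂ)⁻¹ * α) := by
    rw [← Finset.sum_add_distrib]
    exact Finset.sum_le_sum fun α _ => le_tsub_add
  omega

section Filtration

variable {K V : Type*} [DivisionRing K] [AddCommGroup V] [Module K V] [FiniteDimensional K V]

lemma finrank_ker_inf_le_add_finrank_ker_mapQ (N : V →ₗ[K] V) {p p' : Submodule K V}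
    (hp : ∀ v ∈ p, N v ∈ p) (hp' : ∀ v ∈ p', N v ∈ p') :
    finrank K ↥(LinearMap.ker N ⊓ p) ≤ finrank K ↥(LinearMap.ker N ⊓ p') +
      finrank K (LinearMap.ker (Submodule.mapQ (p'.comap p.subtype) (p'.comap p.subtype)
        (N.restrict hp) (fun x hx => hp' x hx))) := by
  have hmap : ((LinearMap.ker N).comap p.subtype).map (p'.comap p.subtype).mkQ ≤
      LinearMap.ker (Submodule.mapQ (p'.comap p.subtype) (p'.comap p.subtype)
        (N.restrict hp) (fun x hx => hp' x hx)) := by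
    rintro _ ⟨x, hx, rfl⟩
    -- `Submodule.mapQ_apply` does not rewrite: the proof argument of `mapQ` is only well-typed
    -- up to unfolding `Submodule.comap`.
    change Submodule.Quotient.mk (N.restrict hp x) = (0 : p ⧸ p'.comap p.subtype)
    rw [Submodule.Quotient.mk_eq_zero]
    change N x ∈ p'
    rw [show N x = 0 from hx]
    exact p'.zero_mem
  have h := Submodule.finrank_le_finrank_inf_ker_add _ hmap
  rw [Submodule.ker_mkQ, ← Submodule.comap_inf, Submodule.finrank_comap_subtype,
    Submodule.finrank_comap_subtype, inf_comm p] at h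
  exact h.trans (Nat.add_le_add_right (Submodule.finrank_mono inf_le_right) _)

lemma finrank_ker_le_sum_finrank_ker_mapQ (N : V →ₗ[K] V) (n : ℕ) (F : ℕ → Submodule K V)
    (hF0 : F 0 = ⊤) (hFn : F n = ⊥) (hNF : ∀ i, ∀ v ∈ F i, N v ∈ F i) :
    finrank K (LinearMap.ker N) ≤ ∑ i ∈ Finset.range n,
      finrank K (LinearMap.ker (Submodule.mapQ ((F (i + 1)).comap (F i).subtype)
        ((F (i + 1)).comap (F i).subtype) (N.restrict (hNF i))
        (fun x hx => hNF (i + 1) x hx))) := by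
  have h_telescope (k : ℕ) : finrank K ↥(LinearMap.ker N ⊓ F 0) ≤
      finrank K ↥(LinearMap.ker N ⊓ F k) + ∑ i ∈ Finset.range k,
        finrank K (LinearMap.ker (Submodule.mapQ ((F (i + 1)).comap (F i).subtype)
          ((F (i + 1)).comap (F i).subtype) (N.restrict (hNF i))
          (fun x hx => hNF (i + 1) x hx))) := by
    induction k with
    | zero => simp
    | succ k ih =>
      have := finrank_ker_inf_le_add_finrank_ker_mapQ N (hNF k) (hNF (k + 1))
      rw [Finset.sum_range_succ]
      omega
  have h := h_telescope n
  rwa [hF0, hFn, inf_top_eq, inf_bot_eq, finrank_bot, zero_add] at h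

end Filtration

lemma bWM_le_finrank_ker {V : Type*} [AddCommGroup V] [Module ℂ V] [FiniteDimensional ℂ V]
    {q : ℝ} (hq : 1 < q) (j : ℤ) {Φ N : V →ₗ[ℂ] V} (hrel : N ∘ₗ Φ = (q : ℂ) • (Φ ∘ₗ N))
    {W : Finset ℂ} (hW : ∀ α, Module.End.HasEigenvalue Φ α → α ∈ W)
    (hwm : ∀ α ∈ W, q ^ ((j : ℝ) / 2) < ‖α‖ → specMult Φ α ≤ specMult Φ ((q : ℂ)⁻¹ * α)) :
    bWM q j Φ W ≤ finrank ℂ (LinearMap.ker N) := by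
  have hc : 0 < q ^ ((j : ℝ) / 2) := Real.rpow_pos_of_pos (by linarith) _
  have hsupp : ∀ α, specMult Φ α ≠ 0 → α ∈ W :=
    fun _ h => hW _ (hasEigenvalue_of_specMult_ne_zero h)
  calc bWM q j Φ W
      ≤ _ := sum_filter_tsub_mul_le_sum_annulus (specMult Φ) W hq hc hsupp hwm
    _ ≤ _ := sum_annulus_le_sum_filter_tsub_inv_mul (specMult Φ) W hq hc hsupp
    _ ≤ _ := sum_specMult_tsub_le_finrank_ker (Complex.ofReal_ne_zero.mpr (by linarith)) hrel _

theorem graded_pure_implies_pure_general (q : ℝ) (hq : 1 < q) (j : ℤ)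
    {V : Type*} [AddCommGroup V] [Module ℂ V] [FiniteDimensional ℂ V]
    (Φ N : V →ₗ[ℂ] V)
    (hrel : N ∘ₗ Φ = (q : ℂ) • (Φ ∘ₗ N))
    (n : ℕ) (F : ℕ → Submodule ℂ V)
    (hF0 : F 0 = ⊤) (hFn : F n = ⊥)
    (hNF : ∀ i, ∀ v ∈ F i, N v ∈ F i)
    (W : Finset ℂ)
    (hWeig : ∀ α : ℂ, α ∈ W ↔ Module.End.HasEigenvalue Φ α)
    (hwm_i : ∀ α ∈ W, q ^ ((j : ℝ) / 2) < ‖α‖ →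
      specMult Φ α ≤ specMult Φ ((q : ℂ)⁻¹ * α))
    (hGrPure :
      (∑ i ∈ Finset.range n,
        Module.finrank ℂ (LinearMap.ker
          (Submodule.mapQ ((F (i + 1)).comap (F i).subtype)
            ((F (i + 1)).comap (F i).subtype) (N.restrict (hNF i))
            (fun x hx => hNF (i + 1) x hx)))) = bWM q j Φ W) :
    (∑ i ∈ Finset.range n,
        Module.finrank ℂ (LinearMap.ker
          (Submodule.mapQ ((F (i + 1)).comap (F i).subtype)
            ((F (i + 1)).comap (F i).subtype) (N.restrict (hNF i))
            (fun x hx => hNF (i + 1) x hx)))) ≥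
        Module.finrank ℂ (LinearMap.ker N) ∧
      Module.finrank ℂ (LinearMap.ker N) ≥ bWM q j Φ W ∧
      Module.finrank ℂ (LinearMap.ker N) = bWM q j Φ W := by
  have h_graded := finrank_ker_le_sum_finrank_ker_mapQ N n F hF0 hFn hNF
  have h_bWM := bWM_le_finrank_ker hq j hrel (fun α => (hWeig α).mpr) hwm_i
  exact ⟨h_graded, h_bWM, le_antisymm (h_graded.trans hGrPure.le) h_bWM⟩

/-- Proposition 3 (quantitative form).  Let `(V, Φ, N)` satisfy the Weil–Deligne relation
and carry a filtration by `(Φ, N)`-stable submodules, whose eigenvalue data `(W, m)` is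
wm-`q`-pure of weight `j`.  If the associated graded module is `q`-pure of weight `j`
(modeled as: the kernel dimension of the induced `N` on the graded module equals
`b(W, m)`), then the kernel-dimension chain
`dim ker(N on Gr V) ≥ dim ker(N on V) ≥ b(W, m)` holds with equality
`dim ker(N on V) = b(W, m)`, i.e. `V` is `q`-pure of weight `j`. -/
theorem graded_pure_implies_pure (q : ℝ) (hq : 1 < q) (j : ℤ)
    {V : Type*} [AddCommGroup V] [Module ℂ V] [FiniteDimensional ℂ V]
    (Φ N : V →ₗ[ℂ] V) (hΦ : IsUnit Φ) (hNnil : IsNilpotent N)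
    (hrel : N ∘ₗ Φ = (q : ℂ) • (Φ ∘ₗ N))
    (n : ℕ) (F : ℕ → Submodule ℂ V)
    (hF0 : F 0 = ⊤) (hFn : F n = ⊥) (hmono : ∀ i, F (i + 1) ≤ F i)
    (hΦF : ∀ i, ∀ v ∈ F i, Φ v ∈ F i) (hNF : ∀ i, ∀ v ∈ F i, N v ∈ F i)
    (W : Finset ℂ)
    (hWeig : ∀ α : ℂ, α ∈ W ↔ Module.End.HasEigenvalue Φ α)
    (hWabs : ∀ α ∈ W, ∃ k : ℤ, ‖α‖ = q ^ ((k : ℝ) / 2))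
    (hwm_i : ∀ α ∈ W, q ^ ((j : ℝ) / 2) < ‖α‖ →
      specMult Φ α ≤ specMult Φ ((q : ℂ)⁻¹ * α))
    (hwm_ii : ∀ α ∈ W, ∀ k : ℤ, ‖α‖ = q ^ ((k : ℝ) / 2) →
      specMult Φ α = specMult Φ (((q : ℂ) ^ (j - k)) * α))
    (hGrPure :
      (∑ i ∈ Finset.range n,
        Module.finrank ℂ (LinearMap.ker
          (Submodule.mapQ ((F (i + 1)).comap (F i).subtype)
            ((F (i + 1)).comap (F i).subtype) (N.restrict (hNF i))
            (fun x hx => hNF (i + 1) x hx)))) = bWM q j Φ W) :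
    (∑ i ∈ Finset.range n,
        Module.finrank ℂ (LinearMap.ker
          (Submodule.mapQ ((F (i + 1)).comap (F i).subtype)
            ((F (i + 1)).comap (F i).subtype) (N.restrict (hNF i))
            (fun x hx => hNF (i + 1) x hx)))) ≥
        Module.finrank ℂ (LinearMap.ker N) ∧
      Module.finrank ℂ (LinearMap.ker N) ≥ bWM q j Φ W ∧
      Module.finrank ℂ (LinearMap.ker N) = bWM q j Φ W :=
  graded_pure_implies_pure_general q hq j Φ N hrel n F hF0 hFn hNF W hWeig hwm_i hGrPure
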